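/- arXiv:2503.07324 — 3 statements merged into one kernel-verified Lean document; each statement's English description precedes it below -/
import Mathlib

section
/- Let (a_k)_{k∈ℕ} be a nonnegative real sequence satisfying a_{k+1} ≤ c·a_k + b_k for all k, where c ∈ (0,1) and b_k ≥ 0. Then for every T ≥ 1, the sum ∑_{k=0}^{T−1} a_k² ≤ (2/(1−c²))·( a_0² + ((1+c²)/(1−c²))·∑_{k=0}^{T−1} b_k² ). -/
/-! Squaring the recursion and applying Young's inequality to the cross term gives the contraction
`a (k+1)^2 ≤ q a_k^2 + r b_k^2` with `q = (1 + c^2)/2 < 1`. Summing it over `k < T` and bounding the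
shifted sum from below by `∑_{k<T} a_k^2 - a_0^2` absorbs the geometric factor into `1/(1 - q)`. -/

open Finset

theorem sum_range_le_div_of_le_mul_add {q : ℝ} {u v : ℕ → ℝ} (hu : ∀ k, 0 ≤ u k) (hq : q < 1)
    (hrec : ∀ k, u (k + 1) ≤ q * u k + v k) (T : ℕ) :
    ∑ k ∈ range T, u k ≤ (u 0 + ∑ k ∈ range T, v k) / (1 - q) := by
  have hshift : ∑ k ∈ range T, u (k + 1) ≤ q * ∑ k ∈ range T, u k + ∑ k ∈ range T, v k := by
    rw [mul_sum, ← sum_add_distrib]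
    exact sum_le_sum fun k _ => hrec k
  have hextend : ∑ k ∈ range T, u k ≤ u 0 + ∑ k ∈ range T, u (k + 1) := by
    rw [add_comm, ← sum_range_succ' u T, sum_range_succ]
    linarith [hu T]
  rw [le_div_iff₀ (sub_pos.mpr hq)]
  linarith

theorem mul_add_sq_le_of_sq_lt_one {c : ℝ} (hc : c ^ 2 < 1) (x y : ℝ) :
    (c * x + y) ^ 2 ≤ (1 + c ^ 2) / 2 * x ^ 2 + (1 + c ^ 2) / (1 - c ^ 2) * y ^ 2 := by
  have hpos : 0 < 1 - c ^ 2 := sub_pos.mpr hc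
  -- Young: `2 c x y ≤ (1 - c^2)/2 · x^2 + 2 c^2/(1 - c^2) · y^2`.
  have hyoung : (1 - c ^ 2) * (c * x + y) ^ 2 ≤
      (1 - c ^ 2) * ((1 + c ^ 2) / 2 * x ^ 2) + (1 + c ^ 2) * y ^ 2 := by
    nlinarith [sq_nonneg ((1 - c ^ 2) * x - 2 * c * y)]
  have hsplit : (1 + c ^ 2) / 2 * x ^ 2 + (1 + c ^ 2) / (1 - c ^ 2) * y ^ 2 =
      ((1 - c ^ 2) * ((1 + c ^ 2) / 2 * x ^ 2) + (1 + c ^ 2) * y ^ 2) / (1 - c ^ 2) := by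
    field_simp
  rw [hsplit, le_div_iff₀ hpos, mul_comm]
  exact hyoung

theorem stmt2_general (c : ℝ) (hc0 : 0 < c) (hc1 : c < 1) (a b : ℕ → ℝ)
    (ha : ∀ k, 0 ≤ a k)
    (hrec : ∀ k, a (k + 1) ≤ c * a k + b k) (T : ℕ) :
    ∑ k ∈ Finset.range T, a k ^ 2 ≤
      2 / (1 - c ^ 2) *
        (a 0 ^ 2 + (1 + c ^ 2) / (1 - c ^ 2) * ∑ k ∈ Finset.range T, b k ^ 2) := by
  have hc : c ^ 2 < 1 := by nlinarith
  have hstep : ∀ k, a (k + 1) ^ 2 ≤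
      (1 + c ^ 2) / 2 * a k ^ 2 + (1 + c ^ 2) / (1 - c ^ 2) * b k ^ 2 := fun k =>
    (pow_le_pow_left₀ (ha (k + 1)) (hrec k) 2).trans (mul_add_sq_le_of_sq_lt_one hc _ _)
  have hq : (1 + c ^ 2) / 2 < 1 := by linarith
  calc ∑ k ∈ range T, a k ^ 2
      ≤ (a 0 ^ 2 + ∑ k ∈ range T, (1 + c ^ 2) / (1 - c ^ 2) * b k ^ 2) / (1 - (1 + c ^ 2) / 2) :=
        sum_range_le_div_of_le_mul_add (fun k => sq_nonneg (a k)) hq hstep T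
    _ = 2 / (1 - c ^ 2) *
          (a 0 ^ 2 + (1 + c ^ 2) / (1 - c ^ 2) * ∑ k ∈ range T, b k ^ 2) := by
        rw [← mul_sum]
        field_simp
        ring

/-- For a nonnegative sequence with a_{k+1} ≤ c·a_k + b_k, c ∈ (0,1), b_k ≥ 0, and T ≥ 1:
∑_{k=0}^{T−1} a_k² ≤ (2/(1−c²))·(a_0² + ((1+c²)/(1−c²))·∑_{k=0}^{T−1} b_k²). -/
theorem stmt2 (c : ℝ) (hc0 : 0 < c) (hc1 : c < 1) (a b : ℕ → ℝ)
    (ha : ∀ k, 0 ≤ a k) (hb : ∀ k, 0 ≤ b k)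
    (hrec : ∀ k, a (k + 1) ≤ c * a k + b k) (T : ℕ) (hT : 1 ≤ T) :
    ∑ k ∈ Finset.range T, a k ^ 2 ≤
      2 / (1 - c ^ 2) *
        (a 0 ^ 2 + (1 + c ^ 2) / (1 - c ^ 2) * ∑ k ∈ Finset.range T, b k ^ 2) :=
  stmt2_general c hc0 hc1 a b ha hrec T
end

section
/- Let v_1, v_2 be nonzero vectors in R^m forming an acute angle θ_{12} ∈ (0, π/2), and let v_3 = λ_1 v_1 + λ_2 v_2 with λ_1, λ_2 ≥ 0 and v_3 ≠ 0. Then the angle θ_{23} between v_3 and v_2 satisfies θ_{23} ≤ θ_{12}; moreover if λ_1 > 0 and λ_2 > 0 then θ_{23} < θ_{12}. -/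
open InnerProductGeometry

/-!
Write `c = cos ∠(x, y)` and `v = a • x + b • y`. Taking the inner product of `v` with `y` gives
`cos ∠(v, y) ‖v‖ = a ‖x‖ c + b ‖y‖`. For `0 ≤ c ≤ 1` the triangle inequality `‖v‖ ≤ a ‖x‖ + b ‖y‖`
then yields `c ‖v‖ + b ‖y‖ (1 - c) ≤ cos ∠(v, y) ‖v‖`, so `cos ∠(v, y) ≥ c`, strictly when
`b ‖y‖ > 0` and `c < 1`; since cosine is strictly decreasing on `[0, π]`, `∠(v, y) ≤ ∠(x, y)`.
-/

namespace InnerProductGeometry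

variable {V : Type*} [NormedAddCommGroup V] [InnerProductSpace ℝ V] {x y : V} {a b : ℝ}

theorem cos_angle_smul_add_smul_mul_norm (hy : y ≠ 0) :
    Real.cos (angle (a • x + b • y) y) * ‖a • x + b • y‖ =
      a * ‖x‖ * Real.cos (angle x y) + b * ‖y‖ := by
  refine mul_right_cancel₀ (norm_ne_zero_iff.mpr hy) ?_
  have hxy := cos_angle_mul_norm_mul_norm x y
  have hvy := cos_angle_mul_norm_mul_norm (a • x + b • y) y
  rw [inner_add_left, real_inner_smul_left, real_inner_smul_left,
    real_inner_self_eq_norm_mul_norm, ← hxy] at hvy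
  linear_combination hvy

theorem cos_angle_mul_norm_add_le_cos_angle_smul_add_smul_mul_norm (ha : 0 ≤ a) (hb : 0 ≤ b)
    (hy : y ≠ 0) (hxy : angle x y ≤ Real.pi / 2) :
    Real.cos (angle x y) * ‖a • x + b • y‖ + b * ‖y‖ * (1 - Real.cos (angle x y)) ≤
      Real.cos (angle (a • x + b • y) y) * ‖a • x + b • y‖ := by
  have hc : 0 ≤ Real.cos (angle x y) :=
    Real.cos_nonneg_of_neg_pi_div_two_le_of_le (by linarith [angle_nonneg x y, Real.pi_pos]) hxy
  have htri : ‖a • x + b • y‖ ≤ a * ‖x‖ + b * ‖y‖ := by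
    simpa [norm_smul, abs_of_nonneg ha, abs_of_nonneg hb] using norm_add_le (a • x) (b • y)
  rw [cos_angle_smul_add_smul_mul_norm hy]
  nlinarith [mul_le_mul_of_nonneg_left htri hc]

theorem angle_smul_add_smul_le (ha : 0 ≤ a) (hb : 0 ≤ b) (hv : a • x + b • y ≠ 0)
    (hxy : angle x y ≤ Real.pi / 2) :
    angle (a • x + b • y) y ≤ angle x y := by
  rcases eq_or_ne y 0 with rfl | hy
  · simp only [angle_zero_right, le_refl]
  rw [← (Real.strictAntiOn_cos.le_iff_ge ⟨angle_nonneg _ _, angle_le_pi _ _⟩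
    ⟨angle_nonneg _ _, angle_le_pi _ _⟩)]
  have hkey := cos_angle_mul_norm_add_le_cos_angle_smul_add_smul_mul_norm ha hb hy hxy
  have hextra : 0 ≤ b * ‖y‖ * (1 - Real.cos (angle x y)) :=
    mul_nonneg (mul_nonneg hb (norm_nonneg y)) (sub_nonneg.mpr (Real.cos_le_one _))
  exact le_of_mul_le_mul_right (by linarith) (norm_pos_iff.mpr hv)

theorem angle_smul_add_smul_lt (ha : 0 ≤ a) (hb : 0 < b) (hy : y ≠ 0) (hxy₀ : 0 < angle x y)
    (hxy : angle x y ≤ Real.pi / 2) :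
    angle (a • x + b • y) y < angle x y := by
  rw [← (Real.strictAntiOn_cos.lt_iff_gt ⟨angle_nonneg _ _, angle_le_pi _ _⟩
    ⟨angle_nonneg _ _, angle_le_pi _ _⟩)]
  have hkey := cos_angle_mul_norm_add_le_cos_angle_smul_add_smul_mul_norm ha hb.le hy hxy
  have hc : Real.cos (angle x y) < 1 := by
    simpa using Real.cos_lt_cos_of_nonneg_of_le_pi le_rfl (angle_le_pi x y) hxy₀
  have hextra : 0 < b * ‖y‖ * (1 - Real.cos (angle x y)) :=
    mul_pos (mul_pos hb (norm_pos_iff.mpr hy)) (sub_pos.mpr hc)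
  exact lt_of_mul_lt_mul_right (by linarith) (norm_nonneg (a • x + b • y))

end InnerProductGeometry

theorem stmt10_general {m : ℕ} (v1 v2 : EuclideanSpace ℝ (Fin m))
    (hv2 : v2 ≠ 0)
    (hacute0 : 0 < angle v1 v2) (hacute1 : angle v1 v2 < Real.pi / 2)
    (l1 l2 : ℝ) (hl1 : 0 ≤ l1) (hl2 : 0 ≤ l2)
    (hv3 : l1 • v1 + l2 • v2 ≠ 0) :
    angle (l1 • v1 + l2 • v2) v2 ≤ angle v1 v2 ∧
    (0 < l1 → 0 < l2 → angle (l1 • v1 + l2 • v2) v2 < angle v1 v2) :=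
  ⟨angle_smul_add_smul_le hl1 hl2 hv3 hacute1.le, fun _ hl2' =>
    angle_smul_add_smul_lt hl1 hl2' hv2 hacute0 hacute1.le⟩

/-- Conic combinations decrease the angle: if v₁, v₂ form an acute angle θ₁₂ ∈ (0, π/2) and
v₃ = λ₁v₁ + λ₂v₂ with λ₁, λ₂ ≥ 0 and v₃ ≠ 0, then the angle between v₃ and v₂ is ≤ θ₁₂,
strictly so when λ₁, λ₂ > 0. -/
theorem stmt10 {m : ℕ} (v1 v2 : EuclideanSpace ℝ (Fin m))
    (hv1 : v1 ≠ 0) (hv2 : v2 ≠ 0)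
    (hacute0 : 0 < angle v1 v2) (hacute1 : angle v1 v2 < Real.pi / 2)
    (l1 l2 : ℝ) (hl1 : 0 ≤ l1) (hl2 : 0 ≤ l2)
    (hv3 : l1 • v1 + l2 • v2 ≠ 0) :
    angle (l1 • v1 + l2 • v2) v2 ≤ angle v1 v2 ∧
    (0 < l1 → 0 < l2 → angle (l1 • v1 + l2 • v2) v2 < angle v1 v2) :=
  stmt10_general v1 v2 hv2 hacute0 hacute1 l1 l2 hl1 hl2 hv3
end

section
/- Let (V_k)_{k∈ℕ} be a nonnegative sequence satisfying V_k ≤ c·V_{k−1} + c·C·‖u_k − u_{k−1}‖ for all k ≥ 1, with c ∈ (0,1) and C > 0, where (u_k) is a sequence in R^n. Then for every T ≥ 1, ∑_{k=0}^{T−1} V_k² ≤ V_0²/(1−ρ_1) + (ρ_2/(1−ρ_1))·∑_{k=1}^{T} ‖u_k − u_{k−1}‖², where ρ_1 = (1+c²)/2 and ρ_2 = ((1+c²)/(1−c²))·c²·C². -/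
/-!
Squaring the recursion and splitting the cross term by Young's inequality with the weight that
leaves the contraction factor `(1 + c²)/2 < 1` gives `V_k² ≤ ρ₁ V_{k-1}² + ρ₂ ‖u_k - u_{k-1}‖²`.
Summing over `k < T` and bounding the shifted sum of `V²` by the full one gives
`S ≤ V₀² + ρ₁ S + ρ₂ D` for `S = ∑_{k<T} V_k²` and `D = ∑_{k=1}^T ‖u_k - u_{k-1}‖²`,
which is solved for `S`.
-/

open Finset

lemma sq_le_of_le_mul_add {a x e c : ℝ} (ha : 0 ≤ a) (hle : a ≤ c * x + e) (hc : c ^ 2 < 1) :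
    a ^ 2 ≤ (1 + c ^ 2) / 2 * x ^ 2 + (1 + c ^ 2) / (1 - c ^ 2) * e ^ 2 := by
  have hc' : 0 < 1 - c ^ 2 := by linarith
  have hsq : a ^ 2 ≤ (c * x + e) ^ 2 := pow_le_pow_left₀ ha hle 2
  have hyoung : (c * x + e) ^ 2 ≤ (1 + c ^ 2) / 2 * x ^ 2 + (1 + c ^ 2) / (1 - c ^ 2) * e ^ 2 := by
    rw [div_mul_eq_mul_div _ (1 - c ^ 2), ← sub_nonneg]
    -- Young's inequality with the weight that makes the slack a perfect square
    have hid : (1 + c ^ 2) / 2 * x ^ 2 + (1 + c ^ 2) * e ^ 2 / (1 - c ^ 2) - (c * x + e) ^ 2 =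
        ((1 - c ^ 2) * x - 2 * c * e) ^ 2 / (2 * (1 - c ^ 2)) := by
      field_simp
      ring
    rw [hid]
    positivity
  exact hsq.trans hyoung

section LinearRecursion

variable {W e : ℕ → ℝ} {ρ β : ℝ}

lemma sum_range_le_add_mul_sum_range (hρ : 0 ≤ ρ) (hβ : 0 ≤ β) (hW : ∀ k, 0 ≤ W k)
    (he : ∀ k, 0 ≤ e k) (hstep : ∀ k, W (k + 1) ≤ ρ * W k + β * e (k + 1)) :
    ∀ T, ∑ k ∈ range T, W k ≤ W 0 + ρ * ∑ k ∈ range T, W k + β * ∑ k ∈ range T, e (k + 1)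
  | 0 => by simpa using hW 0
  | m + 1 => by
    have hstep_sum : ∑ k ∈ range m, W (k + 1) ≤
        ρ * ∑ k ∈ range m, W k + β * ∑ k ∈ range m, e (k + 1) := by
      rw [mul_sum, mul_sum, ← sum_add_distrib]
      exact sum_le_sum fun k _ => hstep k
    have hW_mono : ∑ k ∈ range m, W k ≤ ∑ k ∈ range (m + 1), W k :=
      sum_le_sum_of_subset_of_nonneg (range_subset_range.mpr m.le_succ) fun k _ _ => hW k
    have he_mono : ∑ k ∈ range m, e (k + 1) ≤ ∑ k ∈ range (m + 1), e (k + 1) :=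
      sum_le_sum_of_subset_of_nonneg (range_subset_range.mpr m.le_succ) fun k _ _ => he (k + 1)
    have hsplit : ∑ k ∈ range (m + 1), W k = ∑ k ∈ range m, W (k + 1) + W 0 := sum_range_succ' W m
    linarith [mul_le_mul_of_nonneg_left hW_mono hρ, mul_le_mul_of_nonneg_left he_mono hβ]

lemma sum_range_le_of_le_mul_add (hρ₀ : 0 ≤ ρ) (hρ₁ : ρ < 1) (hβ : 0 ≤ β) (hW : ∀ k, 0 ≤ W k)
    (he : ∀ k, 0 ≤ e k) (hstep : ∀ k, W (k + 1) ≤ ρ * W k + β * e (k + 1)) (T : ℕ) :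
    ∑ k ∈ range T, W k ≤ W 0 / (1 - ρ) + β / (1 - ρ) * ∑ k ∈ Icc 1 T, e k := by
  have hIcc : ∑ k ∈ Icc 1 T, e k = ∑ k ∈ range T, e (k + 1) := by
    rw [range_eq_Ico, sum_Ico_add', zero_add, Ico_add_one_right_eq_Icc]
  rw [hIcc, div_mul_eq_mul_div, ← add_div, le_div_iff₀ (by linarith)]
  linarith [sum_range_le_add_mul_sum_range hρ₀ hβ hW he hstep T]

end LinearRecursion

theorem stmt14_general {n : ℕ} (c C : ℝ) (hc0 : 0 < c) (hc1 : c < 1)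
    (V : ℕ → ℝ) (hV : ∀ k, 0 ≤ V k)
    (u : ℕ → EuclideanSpace ℝ (Fin n))
    (hrec : ∀ k : ℕ, 1 ≤ k → V k ≤ c * V (k - 1) + c * C * ‖u k - u (k - 1)‖)
    (T : ℕ) :
    ∑ k ∈ Finset.range T, V k ^ 2 ≤
      V 0 ^ 2 / (1 - (1 + c ^ 2) / 2) +
        ((1 + c ^ 2) / (1 - c ^ 2) * (c * C) ^ 2) / (1 - (1 + c ^ 2) / 2) *
          ∑ k ∈ Finset.Icc 1 T, ‖u k - u (k - 1)‖ ^ 2 := by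
  have hc2 : c ^ 2 < 1 := by nlinarith
  have hstep : ∀ k, V (k + 1) ^ 2 ≤ (1 + c ^ 2) / 2 * V k ^ 2 +
      (1 + c ^ 2) / (1 - c ^ 2) * (c * C) ^ 2 * ‖u (k + 1) - u (k + 1 - 1)‖ ^ 2 := by
    intro k
    have hle := hrec (k + 1) k.succ_pos
    rw [Nat.add_sub_cancel] at hle ⊢
    calc V (k + 1) ^ 2
        ≤ (1 + c ^ 2) / 2 * V k ^ 2 + (1 + c ^ 2) / (1 - c ^ 2) * (c * C * ‖u (k + 1) - u k‖) ^ 2 :=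
          sq_le_of_le_mul_add (hV _) hle hc2
      _ = _ := by ring
  have hρ₂ : 0 ≤ (1 + c ^ 2) / (1 - c ^ 2) * (c * C) ^ 2 :=
    mul_nonneg (div_nonneg (by positivity) (by linarith)) (sq_nonneg _)
  exact sum_range_le_of_le_mul_add (by positivity) (by linarith) hρ₂ (fun k => sq_nonneg (V k))
    (fun k => sq_nonneg _) hstep T

/-- Cumulative squared bound for a perturbed-contraction sequence: if V_k ≤ c·V_{k−1} +
c·C·‖u_k − u_{k−1}‖ with c ∈ (0,1), C > 0, then ∑_{k=0}^{T−1} V_k² ≤ V_0²/(1−ρ₁) +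
(ρ₂/(1−ρ₁))·∑_{k=1}^{T} ‖u_k − u_{k−1}‖², with ρ₁ = (1+c²)/2 and ρ₂ = ((1+c²)/(1−c²))·(cC)². -/
theorem stmt14 {n : ℕ} (c C : ℝ) (hc0 : 0 < c) (hc1 : c < 1) (hC : 0 < C)
    (V : ℕ → ℝ) (hV : ∀ k, 0 ≤ V k)
    (u : ℕ → EuclideanSpace ℝ (Fin n))
    (hrec : ∀ k : ℕ, 1 ≤ k → V k ≤ c * V (k - 1) + c * C * ‖u k - u (k - 1)‖)
    (T : ℕ) (hT : 1 ≤ T) :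
    ∑ k ∈ Finset.range T, V k ^ 2 ≤
      V 0 ^ 2 / (1 - (1 + c ^ 2) / 2) +
        ((1 + c ^ 2) / (1 - c ^ 2) * (c * C) ^ 2) / (1 - (1 + c ^ 2) / 2) *
          ∑ k ∈ Finset.Icc 1 T, ‖u k - u (k - 1)‖ ^ 2 :=
  stmt14_general c C hc0 hc1 V hV u hrec T
end
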